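/- For all states ρ, σ on a tensor product H₁ ⊗ H₂ of finite-dimensional complex Hilbert spaces, if the support (range) of σ is contained in the support of ρ, then E_m(ρ) ≤ E_m(σ). -/

import Mathlib

open Matrix Kronecker BigOperators ComplexOrder

noncomputable section

namespace QAdditivity

/-- von Neumann entropy of a matrix (junk value `0` if not Hermitian):
`S(ρ) = -∑ᵢ λᵢ log λᵢ` over the eigenvalues of `ρ`. -/
def entropy {ι : Type} [Fintype ι] [DecidableEq ι] (ρ : Matrix ι ι ℂ) : ℝ :=
  if h : ρ.IsHermitian then ∑ i, Real.negMulLog (h.eigenvalues i) else 0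

/-- A state: positive semidefinite with trace one. -/
def IsState {ι : Type} [Fintype ι] (ρ : Matrix ι ι ℂ) : Prop :=
  ρ.PosSemidef ∧ ρ.trace = 1

/-- A pure state: rank-one state, i.e. `|φ⟩⟨φ|` for a unit vector `φ`. -/
def IsPureState {ι : Type} [Fintype ι] (ρ : Matrix ι ι ℂ) : Prop :=
  ∃ φ : ι → ℂ, star φ ⬝ᵥ φ = 1 ∧ ρ = vecMulVec φ (star φ)

/-- Partial trace over the second tensor factor. -/
def trRight {ι κ : Type} [Fintype ι] [Fintype κ]
    (ρ : Matrix (ι × κ) (ι × κ) ℂ) : Matrix ι ι ℂ :=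
  Matrix.of fun i j => ∑ k, ρ (i, k) (j, k)

/-- Partial trace over the first tensor factor. -/
def trLeft {ι κ : Type} [Fintype ι] [Fintype κ]
    (ρ : Matrix (ι × κ) (ι × κ) ℂ) : Matrix κ κ ℂ :=
  Matrix.of fun k l => ∑ i, ρ (i, k) (i, l)

/-- Entanglement of a (pure) bipartite state: `E(π) = S(tr_{H₂} π)`. -/
def pureEnt {ι κ : Type} [Fintype ι] [Fintype κ] [DecidableEq ι]
    (π : Matrix (ι × κ) (ι × κ) ℂ) : ℝ :=
  entropy (trRight π)

/-- `E_m(ρ)`: minimum over finite pure-state ensembles for `ρ` of the minimal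
entanglement appearing in the ensemble. -/
def Em {ι κ : Type} [Fintype ι] [Fintype κ] [DecidableEq ι]
    (ρ : Matrix (ι × κ) (ι × κ) ℂ) : ℝ :=
  sInf { e : ℝ | ∃ (n : ℕ) (p : Fin (n + 1) → ℝ)
      (π : Fin (n + 1) → Matrix (ι × κ) (ι × κ) ℂ),
    (∀ i, 0 < p i) ∧ (∀ i, IsPureState (π i)) ∧
    (∑ i, (p i : ℂ) • π i) = ρ ∧
    e = Finset.univ.inf' Finset.univ_nonempty fun i => pureEnt (π i) }

/-- Entanglement of formation `E_f(ρ)`. -/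
def Ef {ι κ : Type} [Fintype ι] [Fintype κ] [DecidableEq ι]
    (ρ : Matrix (ι × κ) (ι × κ) ℂ) : ℝ :=
  sInf { e : ℝ | ∃ (n : ℕ) (p : Fin (n + 1) → ℝ)
      (π : Fin (n + 1) → Matrix (ι × κ) (ι × κ) ℂ),
    (∀ i, 0 < p i) ∧ (∀ i, IsPureState (π i)) ∧
    (∑ i, (p i : ℂ) • π i) = ρ ∧
    e = ∑ i, p i * pureEnt (π i) }

/-- Canonical reordering `(H₁⊗H₂)⊗(H₁'⊗H₂') ≃ (H₁⊗H₁')⊗(H₂⊗H₂')` on matrices. -/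
def reorder {a b a' b' : Type}
    (M : Matrix ((a × b) × (a' × b')) ((a × b) × (a' × b')) ℂ) :
    Matrix ((a × a') × (b × b')) ((a × a') × (b × b')) ℂ :=
  Matrix.reindex (Equiv.prodProdProdComm a b a' b') (Equiv.prodProdProdComm a b a' b') M

/-- Complete positivity of a superoperator. -/
def IsCompletelyPositive {κ η : Type} [Fintype κ] [Fintype η]
    (f : Matrix κ κ ℂ → Matrix η η ℂ) : Prop :=
  ∀ (n : ℕ) (M : Matrix (κ × Fin n) (κ × Fin n) ℂ), M.PosSemidef →
    Matrix.PosSemidef (Matrix.of fun p q : η × Fin n =>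
      f (Matrix.of fun a b => M (a, p.2) (b, q.2)) p.1 q.1)

/-- A quantum channel: a completely positive trace preserving linear map. -/
def IsChannel {κ η : Type} [Fintype κ] [Fintype η]
    (f : Matrix κ κ ℂ → Matrix η η ℂ) : Prop :=
  IsLinearMap ℂ f ∧ IsCompletelyPositive f ∧ ∀ M, (f M).trace = M.trace

/-- Minimum output entropy of a channel. -/
def Smin {κ η : Type} [Fintype κ] [Fintype η] [DecidableEq η]
    (f : Matrix κ κ ℂ → Matrix η η ℂ) : ℝ :=
  sInf { e : ℝ | ∃ ρ : Matrix κ κ ℂ, IsState ρ ∧ e = entropy (f ρ) }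

/-- The tensor product `Λ ⊗ Λ'` of two superoperators (defined on all of
`B(K ⊗ K')` by linearity via matrix units). -/
def tensorChannel {κ η κ' η' : Type} [Fintype κ] [Fintype κ']
    [DecidableEq κ] [DecidableEq κ']
    (f : Matrix κ κ ℂ → Matrix η η ℂ) (g : Matrix κ' κ' ℂ → Matrix η' η' ℂ) :
    Matrix (κ × κ') (κ × κ') ℂ → Matrix (η × η') (η × η') ℂ :=
  fun M => Matrix.of fun p q =>
    ∑ a, ∑ b, ∑ a', ∑ b', M (a, a') (b, b') *
      f (Matrix.single a b 1) p.1 q.1 *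
      g (Matrix.single a' b' 1) p.2 q.2

/-- Support of an operator: its range. -/
def supp {ι : Type} [Fintype ι] (ρ : Matrix ι ι ℂ) : Submodule ℂ (ι → ℂ) :=
  LinearMap.range ρ.mulVecLin

end QAdditivity

/-! If a pure state `|φ⟩⟨φ|` occurs with positive weight in an ensemble for `σ`, then `φ` lies in
`supp σ ⊆ supp ρ`. By Cauchy–Schwarz, a vector in the support of `ρ` can be split off:
`ρ - c |φ⟩⟨φ| ≥ 0` for some `c > 0`. Decomposing this remainder into pure states gives an
ensemble for `ρ` that contains `|φ⟩⟨φ|`, so `E_m(ρ) ≤ E(|φ⟩⟨φ|)`; choosing `|φ⟩⟨φ|` of minimal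
entanglement in the ensemble for `σ` gives the claim. -/

namespace Matrix

variable {ι : Type} [Fintype ι]

theorem star_dotProduct_vecMulVec_mulVec (φ x : ι → ℂ) :
    star x ⬝ᵥ vecMulVec φ (star φ) *ᵥ x = Complex.normSq (star φ ⬝ᵥ x) := by
  rw [vecMulVec_mulVec, dotProduct_smul, ← Complex.mul_conj, op_smul_eq_mul, mul_comm,
    star_dotProduct x]
  rfl

theorem PosSemidef.normSq_star_mulVec_dotProduct_le {ρ : Matrix ι ι ℂ}
    (hρ : ρ.PosSemidef) (ψ x : ι → ℂ) :
    Complex.normSq (star (ρ *ᵥ ψ) ⬝ᵥ x) ≤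
      (star ψ ⬝ᵥ ρ *ᵥ ψ).re * (star x ⬝ᵥ ρ *ᵥ x).re := by
  have hcs : ‖star ψ ⬝ᵥ ρ *ᵥ x‖ * ‖star x ⬝ᵥ ρ *ᵥ ψ‖ ≤
      (star ψ ⬝ᵥ ρ *ᵥ ψ).re * (star x ⬝ᵥ ρ *ᵥ x).re := by
    let := ρ.toSeminormedAddCommGroup hρ
    let := ρ.toInnerProductSpace hρ
    simp only [dotProduct_comm (star _)]
    exact inner_mul_inner_self_le (𝕜 := ℂ) ψ x
  have hadj : star (ρ *ᵥ ψ) ⬝ᵥ x = star ψ ⬝ᵥ ρ *ᵥ x := by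
    rw [star_mulVec, hρ.1.eq, dotProduct_mulVec]
  have hswap : star x ⬝ᵥ ρ *ᵥ ψ = star (star ψ ⬝ᵥ ρ *ᵥ x) := by
    rw [star_dotProduct, ← hadj, star_dotProduct]
  rwa [hswap, norm_star, ← sq, ← Complex.normSq_eq_norm_sq, ← hadj] at hcs

end Matrix

namespace QAdditivity

section Support
variable {ι : Type} [Fintype ι]
open scoped MatrixOrder

theorem mem_supp_of_forall_mulVec_eq_zero {σ : Matrix ι ι ℂ} (hσ : σ.IsHermitian)
    {φ : ι → ℂ} (h : ∀ x, σ *ᵥ x = 0 → star φ ⬝ᵥ x = 0) : φ ∈ supp σ := by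
  classical
  set T := toEuclideanLin σ
  have hT : T.IsSymmetric := isSymmetric_toEuclideanLin_iff.mpr hσ
  have hφ : WithLp.toLp 2 φ ∈ (LinearMap.ker T)ᗮ := by
    rw [Submodule.mem_orthogonal']
    intro u hu
    rw [EuclideanSpace.inner_eq_star_dotProduct, dotProduct_comm]
    exact h u.ofLp (congrArg WithLp.ofLp hu)
  rw [← hT.orthogonal_range, Submodule.orthogonal_orthogonal] at hφ
  obtain ⟨y, hy⟩ := hφ
  exact ⟨y.ofLp, congrArg WithLp.ofLp hy⟩

theorem mem_supp_of_smul_vecMulVec_le {σ : Matrix ι ι ℂ} (hσ : σ.IsHermitian)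
    {φ : ι → ℂ} {c : ℝ} (hc : 0 < c) (h : (c : ℂ) • vecMulVec φ (star φ) ≤ σ) :
    φ ∈ supp σ := by
  refine mem_supp_of_forall_mulVec_eq_zero hσ fun x hx => ?_
  have hq := (Matrix.le_iff.mp h).dotProduct_mulVec_nonneg x
  rw [sub_mulVec, dotProduct_sub, hx, dotProduct_zero, smul_mulVec, dotProduct_smul,
    star_dotProduct_vecMulVec_mulVec, zero_sub, smul_eq_mul, neg_nonneg,
    ← Complex.ofReal_mul, ← Complex.ofReal_zero, Complex.real_le_real] at hq
  exact Complex.normSq_eq_zero.mp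
    (le_antisymm (nonpos_of_mul_nonpos_right hq hc) (Complex.normSq_nonneg _))

theorem exists_smul_vecMulVec_le_of_mem_supp {ρ : Matrix ι ι ℂ} (hρ : ρ.PosSemidef)
    {φ : ι → ℂ} (hφ : φ ∈ supp ρ) : ∃ c : ℝ, 0 < c ∧ (c : ℂ) • vecMulVec φ (star φ) ≤ ρ := by
  obtain ⟨ψ, rfl⟩ := hφ
  -- Cauchy–Schwarz for `(x, y) ↦ xᴴ ρ y` gives `|(ρ ψ)ᴴ x|² ≤ (ψᴴ ρ ψ) (xᴴ ρ x)`;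
  -- the `1 +` keeps `c` positive when `ρ ψ = 0`.
  set r := (star ψ ⬝ᵥ ρ *ᵥ ψ).re
  have hr : 0 ≤ r := hρ.re_dotProduct_nonneg ψ
  set c := (1 + r)⁻¹
  have hc : 0 < c := by positivity
  have hcr : c * r ≤ 1 := by rw [inv_mul_le_iff₀ (by positivity)]; linarith
  refine ⟨c, hc, Matrix.le_iff.mpr (.of_dotProduct_mulVec_nonneg ?_ fun x => ?_)⟩
  · exact hρ.1.sub ((posSemidef_vecMulVec_self_star _).smul (Complex.zero_le_real.mpr hc.le)).1
  have hx := hρ.dotProduct_mulVec_nonneg x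
  have hcs := hρ.normSq_star_mulVec_dotProduct_le ψ x
  rw [mulVecLin_apply, sub_mulVec, dotProduct_sub, smul_mulVec, dotProduct_smul,
    star_dotProduct_vecMulVec_mulVec, smul_eq_mul, ← Complex.ofReal_mul]
  have hxre : star x ⬝ᵥ ρ *ᵥ x = (star x ⬝ᵥ ρ *ᵥ x).re :=
    Complex.eq_re_of_ofReal_le (by rwa [Complex.ofReal_zero])
  rw [hxre, ← Complex.ofReal_sub, Complex.zero_le_real, sub_nonneg]
  calc c * Complex.normSq (star (ρ *ᵥ ψ) ⬝ᵥ x) ≤ c * (r * (star x ⬝ᵥ ρ *ᵥ x).re) :=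
        mul_le_mul_of_nonneg_left hcs hc.le
    _ = (c * r) * (star x ⬝ᵥ ρ *ᵥ x).re := by ring
    _ ≤ (star x ⬝ᵥ ρ *ᵥ x).re := mul_le_of_le_one_left (hρ.re_dotProduct_nonneg x) hcr

end Support

section Ensemble
variable {ι : Type} [Fintype ι]

def IsPureEnsemble {n : ℕ} (p : Fin n → ℝ) (π : Fin n → Matrix ι ι ℂ) (ρ : Matrix ι ι ℂ) :
    Prop :=
  (∀ i, 0 < p i) ∧ (∀ i, IsPureState (π i)) ∧ ∑ i, (p i : ℂ) • π i = ρ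

theorem IsPureEnsemble.cons {n : ℕ} {p : Fin n → ℝ} {π : Fin n → Matrix ι ι ℂ}
    {τ : Matrix ι ι ℂ} (h : IsPureEnsemble p π τ) {c : ℝ} (hc : 0 < c) {μ : Matrix ι ι ℂ}
    (hμ : IsPureState μ) :
    IsPureEnsemble (Fin.cons c p : Fin (n + 1) → ℝ) (Fin.cons μ π) ((c : ℂ) • μ + τ) :=
  ⟨Fin.cases hc h.1, Fin.cases hμ h.2.1, by
    rw [Fin.sum_univ_succ]; simp only [Fin.cons_zero, Fin.cons_succ, h.2.2]⟩

theorem exists_smul_isPureState_eq_vecMulVec {v : ι → ℂ} (hv : v ≠ 0) :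
    ∃ q : ℝ, 0 < q ∧ ∃ μ, IsPureState μ ∧ (q : ℂ) • μ = vecMulVec v (star v) := by
  set q := (star v ⬝ᵥ v).re
  have hvq : star v ⬝ᵥ v = q := Complex.eq_re_of_ofReal_le (r := 0) (by simp)
  have hq : 0 < q := by
    refine lt_of_le_of_ne (by simpa [hvq] using dotProduct_star_self_nonneg v) fun h => hv ?_
    rw [← dotProduct_star_self_eq_zero, hvq, ← h, Complex.ofReal_zero]
  have hnorm : (√q : ℂ)⁻¹ * (√q : ℂ)⁻¹ * q = 1 := by
    rw [← mul_inv, ← Complex.ofReal_mul, Real.mul_self_sqrt hq.le,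
      inv_mul_cancel₀ (by exact_mod_cast hq.ne')]
  set u := (√q : ℂ)⁻¹ • v
  refine ⟨q, hq, vecMulVec u (star u), ⟨u, ?_, rfl⟩, ?_⟩
  · simp only [u, star_smul, dotProduct_smul, smul_dotProduct, hvq, smul_eq_mul, star_inv₀,
      Complex.star_def, Complex.conj_ofReal]
    rw [← mul_assoc, hnorm]
  · simp only [u, star_smul, star_inv₀, RCLike.star_def, Complex.conj_ofReal, vecMulVec_smul,
      smul_vecMulVec, smul_smul]
    rw [mul_comm, hnorm, one_smul]

theorem exists_isPureEnsemble {τ : Matrix ι ι ℂ} (hτ : τ.PosSemidef) :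
    ∃ (n : ℕ) (p : Fin n → ℝ) (π : Fin n → Matrix ι ι ℂ), IsPureEnsemble p π τ := by
  obtain ⟨m, v, rfl⟩ := posSemidef_iff_eq_sum_vecMulVec.mp hτ
  clear hτ
  induction m with
  | zero => exact ⟨0, Fin.elim0, Fin.elim0, fun i => i.elim0, fun i => i.elim0, by simp⟩
  | succ m ih =>
    obtain ⟨n, p, π, h⟩ := ih (v ∘ Fin.succ)
    rw [Fin.sum_univ_succ]
    by_cases hv : v 0 = 0
    · exact ⟨n, p, π, by simpa [hv] using h⟩
    · obtain ⟨q, hq, μ, hμ, hqμ⟩ := exists_smul_isPureState_eq_vecMulVec hv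
      exact ⟨n + 1, _, _, hqμ ▸ h.cons hq hμ⟩

end Ensemble

section Entropy
variable {ι κ : Type} [Fintype ι] [Fintype κ]

theorem IsPureState.isState {π : Matrix ι ι ℂ} (h : IsPureState π) : IsState π := by
  obtain ⟨φ, hφ, rfl⟩ := h
  refine ⟨posSemidef_vecMulVec_self_star φ, ?_⟩
  rw [trace_vecMulVec, dotProduct_comm, hφ]

theorem entropy_nonneg [DecidableEq ι] {ρ : Matrix ι ι ℂ} (hρ : IsState ρ) : 0 ≤ entropy ρ := by
  obtain ⟨hpsd, htr⟩ := hρ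
  rw [entropy, dif_pos hpsd.1]
  have hev := hpsd.eigenvalues_nonneg
  have hsum : ∑ i, hpsd.1.eigenvalues i = 1 := by
    rw [hpsd.1.trace_eq_sum_eigenvalues] at htr
    simpa using congrArg Complex.re htr
  refine Finset.sum_nonneg fun i _ => Real.negMulLog_nonneg (hev i) ?_
  exact hsum ▸ Finset.single_le_sum (fun j _ => hev j) (Finset.mem_univ i)

theorem trRight_eq_sum_submatrix (ρ : Matrix (ι × κ) (ι × κ) ℂ) :
    trRight ρ = ∑ k, ρ.submatrix (·, k) (·, k) := by
  ext i j
  simp [trRight, Matrix.sum_apply]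

theorem IsState.trRight {ρ : Matrix (ι × κ) (ι × κ) ℂ} (hρ : IsState ρ) :
    IsState (trRight ρ) := by
  refine ⟨?_, ?_⟩
  · rw [trRight_eq_sum_submatrix]
    exact posSemidef_sum _ fun k _ => hρ.1.submatrix _
  · rw [← hρ.2]
    simp [QAdditivity.trRight, Matrix.trace, Fintype.sum_prod_type]

theorem pureEnt_nonneg [DecidableEq ι] {π : Matrix (ι × κ) (ι × κ) ℂ} (hπ : IsPureState π) :
    0 ≤ pureEnt π :=
  entropy_nonneg hπ.isState.trRight

end Entropy

section MinimalEntanglement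
variable {ι κ : Type} [Fintype ι] [Fintype κ]
open scoped MatrixOrder

theorem IsPureEnsemble.posSemidef_smul {n : ℕ} {p : Fin n → ℝ} {π : Fin n → Matrix ι ι ℂ}
    {ρ : Matrix ι ι ℂ} (h : IsPureEnsemble p π ρ) (i : Fin n) : ((p i : ℂ) • π i).PosSemidef :=
  (h.2.1 i).isState.1.smul (Complex.zero_le_real.mpr (h.1 i).le)

theorem IsPureEnsemble.posSemidef {n : ℕ} {p : Fin n → ℝ} {π : Fin n → Matrix ι ι ℂ}
    {ρ : Matrix ι ι ℂ} (h : IsPureEnsemble p π ρ) : ρ.PosSemidef :=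
  h.2.2 ▸ posSemidef_sum _ fun i _ => h.posSemidef_smul i

theorem IsPureEnsemble.mem_supp {n : ℕ} {p : Fin n → ℝ} {π : Fin n → Matrix ι ι ℂ}
    {ρ : Matrix ι ι ℂ} (h : IsPureEnsemble p π ρ) {i : Fin n} {φ : ι → ℂ}
    (hi : π i = vecMulVec φ (star φ)) : φ ∈ supp ρ := by
  refine mem_supp_of_smul_vecMulVec_le h.posSemidef.1 (h.1 i) ?_
  rw [← hi, ← h.2.2]
  exact Finset.single_le_sum (fun j _ => nonneg_iff_posSemidef.mpr (h.posSemidef_smul j))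
    (Finset.mem_univ i)

theorem exists_isPureEnsemble_of_isState {ρ : Matrix ι ι ℂ} (hρ : IsState ρ) :
    ∃ (n : ℕ) (p : Fin (n + 1) → ℝ) (π : Fin (n + 1) → Matrix ι ι ℂ), IsPureEnsemble p π ρ := by
  obtain ⟨_ | n, p, π, h⟩ := exists_isPureEnsemble hρ.1
  · simpa [← h.2.2] using hρ.2
  · exact ⟨n, p, π, h⟩

variable [DecidableEq ι]

theorem Em_le_pureEnt {ρ : Matrix (ι × κ) (ι × κ) ℂ} {n : ℕ} {p : Fin (n + 1) → ℝ}
    {π : Fin (n + 1) → Matrix (ι × κ) (ι × κ) ℂ} (h : IsPureEnsemble p π ρ) (i : Fin (n + 1)) :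
    Em ρ ≤ pureEnt (π i) := by
  unfold Em
  refine csInf_le_of_le ⟨0, ?_⟩ ⟨n, p, π, h.1, h.2.1, h.2.2, rfl⟩
    (Finset.inf'_le _ (Finset.mem_univ i))
  rintro _ ⟨n, p, π, -, hπ, -, rfl⟩
  exact Finset.le_inf' _ _ fun i _ => pureEnt_nonneg (hπ i)

theorem Em_le_pureEnt_of_mem_supp {ρ : Matrix (ι × κ) (ι × κ) ℂ} (hρ : ρ.PosSemidef)
    {φ : ι × κ → ℂ} (hφ : star φ ⬝ᵥ φ = 1) (hφρ : φ ∈ supp ρ) :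
    Em ρ ≤ pureEnt (vecMulVec φ (star φ)) := by
  obtain ⟨c, hc, hle⟩ := exists_smul_vecMulVec_le_of_mem_supp hρ hφρ
  obtain ⟨n, p, π, h⟩ := exists_isPureEnsemble (Matrix.le_iff.mp hle)
  have hρ' := h.cons hc ⟨φ, hφ, rfl⟩
  rw [add_sub_cancel] at hρ'
  exact Em_le_pureEnt hρ' 0

end MinimalEntanglement

/-- `E_m` is antitone with respect to inclusion of supports. -/
theorem Em_antitone_support
    {ι κ : Type} [Fintype ι] [Fintype κ] [DecidableEq ι]
    (ρ σ : Matrix (ι × κ) (ι × κ) ℂ) (hρ : IsState ρ) (hσ : IsState σ)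
    (h : supp σ ≤ supp ρ) :
    Em ρ ≤ Em σ := by
  obtain ⟨n, p, π, hσπ⟩ := exists_isPureEnsemble_of_isState hσ
  refine le_csInf ⟨_, n, p, π, hσπ.1, hσπ.2.1, hσπ.2.2, rfl⟩ ?_
  rintro _ ⟨m, q, μ, hq, hμ, hsum, rfl⟩
  obtain ⟨i, -, hi⟩ := Finset.exists_mem_eq_inf' Finset.univ_nonempty fun i => pureEnt (μ i)
  obtain ⟨φ, hφ, hμi⟩ := hμ i
  rw [hi, hμi]
  exact Em_le_pureEnt_of_mem_supp hρ.1 hφ (h (IsPureEnsemble.mem_supp ⟨hq, hμ, hsum⟩ hμi))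

end QAdditivity
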